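/- If a tree pattern q is contained in an intersection p₁ ∩ ⋯ ∩ p_k of tree patterns (q ⊑ p_i for all i), then the identity on q together with the containment mappings from each p_i into q witnesses q ⊑ d where d is the DAG pattern formed by merging the roots and the output nodes of the p_i; conversely d ⊑ p_i for each i. -/

import Mathlib

/-- A tree pattern: nodes labeled in `σ`, child (/) and descendant (//) edges,
a distinguished root and output node. -/
structure TreePattern (σ : Type) where
  Node : Type
  root : Node
  out : Node
  label : Node → σ
  child : Node → Node → Prop
  desc : Node → Node → Prop

/-- An edge of either kind. -/
def TreePattern.edge {σ : Type} (p : TreePattern σ) (a b : p.Node) : Prop :=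
  p.child a b ∨ p.desc a b

/-- A path of length ≥ 1 inside a pattern. -/
def TreePattern.reach {σ : Type} (p : TreePattern σ) : p.Node → p.Node → Prop :=
  Relation.TransGen p.edge

/-- A containment mapping from pattern `p` into pattern `q`. -/
structure IsContainmentMapping {σ : Type} (p q : TreePattern σ)
    (h : p.Node → q.Node) : Prop where
  root : h p.root = q.root
  out : h p.out = q.out
  label : ∀ x, q.label (h x) = p.label x
  child : ∀ a b, p.child a b → q.child (h a) (h b)
  desc : ∀ a b, p.desc a b → q.reach (h a) (h b)

/-- A labeled tree. -/
structure LTree (σ : Type) where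
  Node : Type
  root : Node
  label : Node → σ
  child : Node → Node → Prop

/-- Proper ancestor-descendant relation in a tree. -/
def LTree.desc {σ : Type} (t : LTree σ) : t.Node → t.Node → Prop :=
  Relation.TransGen t.child

/-- An embedding of a tree pattern into a labeled tree. -/
structure IsEmbedding {σ : Type} (p : TreePattern σ) (t : LTree σ)
    (e : p.Node → t.Node) : Prop where
  root : e p.root = t.root
  label : ∀ x, t.label (e x) = p.label x
  child : ∀ a b, p.child a b → t.child (e a) (e b)
  desc : ∀ a b, p.desc a b → t.desc (e a) (e b)

/-- The answers of pattern `p` on tree `t`: images of the output node under embeddings. -/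
def answers {σ : Type} (p : TreePattern σ) (t : LTree σ) : Set t.Node :=
  {x | ∃ e, IsEmbedding p t e ∧ e p.out = x}

/-- Semantic containment `q ⊑ p`: every answer of `q` is an answer of `p`, on all trees. -/
def contained {σ : Type} (q p : TreePattern σ) : Prop :=
  ∀ t : LTree σ, answers q t ⊆ answers p t

/-- Answers of the DAG pattern obtained by merging the roots and the output
nodes of the patterns `p i`: an embedding of the merged DAG is exactly a family
of embeddings of the `p i` agreeing on the (merged) output node. -/
def mergedAnswers {σ : Type} {k : ℕ} (p : Fin k → TreePattern σ)
    (t : LTree σ) : Set t.Node :=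
  {x | ∃ e : (i : Fin k) → (p i).Node → t.Node,
        ∀ i, IsEmbedding (p i) t (e i) ∧ e i (p i).out = x}

/-!
An embedding of `q` into a tree, precomposed with a containment mapping `pᵢ → q`, is an
embedding of `pᵢ` with the same output (a `//`-edge goes to a nonempty path of `q`, hence to
a proper descendant). Choosing one such embedding for every `i` embeds the merged DAG. An
embedding of the merged DAG is the same thing as a family of embeddings of the `pᵢ` agreeing
on the output node, so its answers are exactly the common answers of the `pᵢ`.
-/

namespace IsEmbedding

variable {σ : Type} {q : TreePattern σ} {t : LTree σ} {e : q.Node → t.Node}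

theorem desc_of_reach (he : IsEmbedding q t e) {a b : q.Node} (hab : q.reach a b) :
    t.desc (e a) (e b) :=
  Relation.TransGen.lift' e (fun _ _ hedge => Or.elim hedge
    (fun hc => Relation.TransGen.single (he.child _ _ hc)) (he.desc _ _)) _ _ hab

theorem comp_isContainmentMapping (he : IsEmbedding q t e) {p : TreePattern σ}
    {h : p.Node → q.Node} (hh : IsContainmentMapping p q h) : IsEmbedding p t (e ∘ h) where
  root := by simp only [Function.comp_apply, hh.root, he.root]
  label x := by simp only [Function.comp_apply, he.label, hh.label]
  child a b hab := he.child _ _ (hh.child a b hab)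
  desc a b hab := he.desc_of_reach (hh.desc a b hab)

end IsEmbedding

theorem contained_of_isContainmentMapping {σ : Type} {p q : TreePattern σ}
    {h : p.Node → q.Node} (hh : IsContainmentMapping p q h) : contained q p := by
  rintro t _ ⟨e, he, rfl⟩
  exact ⟨e ∘ h, he.comp_isContainmentMapping hh, by simp only [Function.comp_apply, hh.out]⟩

theorem mergedAnswers_eq_iInter_answers {σ : Type} {k : ℕ} (p : Fin k → TreePattern σ)
    (t : LTree σ) : mergedAnswers p t = ⋂ i, answers (p i) t := by
  ext x
  simp only [mergedAnswers, answers, Set.mem_ofPred_eq, Set.mem_iInter, Classical.skolem]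

/-- If `q` is contained in every `p i` via containment mappings, then `q ⊑ d`
where `d` is the DAG pattern merging roots and outputs of the `p i`; and
conversely the answers of `d` are exactly the intersection of the answers of
the `p i` on every tree (so `d ⊑ p i` for each `i`). -/
theorem merged_dag_intersection {σ : Type} {k : ℕ}
    (p : Fin k → TreePattern σ) (q : TreePattern σ)
    (hcm : ∀ i, ∃ h : (p i).Node → q.Node, IsContainmentMapping (p i) q h) :
    (∀ t : LTree σ, answers q t ⊆ mergedAnswers p t) ∧
    (∀ t : LTree σ, mergedAnswers p t = ⋂ i, answers (p i) t) := by
  refine ⟨fun t => ?_, mergedAnswers_eq_iInter_answers p⟩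
  rw [mergedAnswers_eq_iInter_answers]
  refine Set.subset_iInter fun i => ?_
  obtain ⟨h, hh⟩ := hcm i
  exact contained_of_isContainmentMapping hh t
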